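/- Let f : ℝᵈ → ℂ be Γ-periodic with f ∈ L²(Ω), where Ω is a fundamental cell of the lattice Γ with volume |Ω|. For ε > 0 define the Steklov smoothing operator (S_ε u)(x) = |Ω|^{-1} ∫_Ω u(x - εz) dz on L²(ℝᵈ). Then the operator u ↦ f(x/ε)·(S_ε u)(x) is bounded on L²(ℝᵈ) with norm at most |Ω|^{-1/2}·‖f‖_{L²(Ω)}. -/

import Mathlib

/-!
Cauchy–Schwarz on the cell gives `|S_ε u(x)|² ≤ |Ω|⁻¹ ∫_Ω |u(x - εz)|² dz`. Integrating this against
`|f(x/ε)|²`, Tonelli and the substitution `x = y + εz` turn the double integral into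
`∫ |u(y)|² (∫_Ω |f(y/ε + z)|² dz) dy`, and by periodicity the inner integral equals `‖f‖²_{L²(Ω)}`
for every `y`, because any translate of a fundamental cell is again a fundamental cell.
-/

open MeasureTheory Measure Pointwise
open scoped ENNReal

namespace MeasureTheory.IsAddFundamentalDomain

variable {G α : Type*} [AddGroup G] [AddAction G α] [MeasurableSpace α] {μ : Measure α}
  {s : Set α}

theorem countable_of_measure_ne_zero [SFinite μ] [MeasurableConstVAdd G α]
    [VAddInvariantMeasure G α μ] (h : IsAddFundamentalDomain G s μ) (hs : μ s ≠ 0) : Countable G := by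
  have hpos := countable_meas_pos_of_disjoint_iUnion₀ (As := fun g : G => g +ᵥ s)
    h.nullMeasurableSet_vadd h.aedisjoint
  simp only [measure_vadd, pos_iff_ne_zero.2 hs, Set.ofPred_true] at hpos
  exact Set.countable_univ_iff.1 hpos

theorem aestronglyMeasurable_of_restrict [Countable G] [MeasurableConstVAdd G α]
    [VAddInvariantMeasure G α μ] {β : Type*} [TopologicalSpace β]
    [TopologicalSpace.PseudoMetrizableSpace β] (h : IsAddFundamentalDomain G s μ) {f : α → β}
    (hf : ∀ (g : G) x, f (g +ᵥ x) = f x) (hfs : AEStronglyMeasurable f (μ.restrict s)) :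
    AEStronglyMeasurable f μ := by
  rw [← h.sum_restrict, aestronglyMeasurable_sum_measure_iff]
  exact fun g => (h.aestronglyMeasurable_on_iff (h.vadd g) hf).1 hfs

theorem setLIntegral_add_left_eq_self {E : Type*} [AddCommGroup E] [MeasurableSpace E]
    [MeasurableAdd E] {μ : Measure E} [μ.IsAddLeftInvariant] {Γ : AddSubgroup E} [Countable Γ] {Ω : Set E}
    (hΩ : IsAddFundamentalDomain Γ Ω μ) {F : E → ℝ≥0∞} (hF : ∀ γ ∈ Γ, ∀ x, F (x + γ) = F x)
    (w : E) : ∫⁻ z in Ω, F (w + z) ∂μ = ∫⁻ z in Ω, F z ∂μ := by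
  refine ((measurePreserving_add_left μ w).setLIntegral_comp_emb
    (measurableEmbedding_addLeft w) F Ω).trans
    ((hΩ.vadd_of_comm w).setLIntegral_eq hΩ F fun γ x => ?_)
  rw [AddSubgroup.vadd_def, vadd_eq_add, add_comm]
  exact hF γ γ.2 x

end MeasureTheory.IsAddFundamentalDomain

namespace MeasureTheory

theorem sq_eLpNorm_two {α F : Type*} [MeasurableSpace α] [NormedAddCommGroup F] {μ : Measure α}
    (g : α → F) : eLpNorm g 2 μ ^ 2 = ∫⁻ x, ‖g x‖ₑ ^ 2 ∂μ := by
  simpa using eLpNorm_nnreal_pow_eq_lintegral (f := g) (μ := μ) (p := 2) two_ne_zero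

theorem enorm_setIntegral_sq_le {α F : Type*} [MeasurableSpace α] [NormedAddCommGroup F]
    [NormedSpace ℝ F] {μ : Measure α} {s : Set α} {g : α → F}
    (hg : AEStronglyMeasurable g (μ.restrict s)) :
    ‖∫ z in s, g z ∂μ‖ₑ ^ 2 ≤ μ s * ∫⁻ z in s, ‖g z‖ₑ ^ 2 ∂μ := by
  have hL1 : ‖∫ z in s, g z ∂μ‖ₑ ≤ eLpNorm g 1 (μ.restrict s) :=
    eLpNorm_one_eq_lintegral_enorm (f := g) ▸ enorm_integral_le_lintegral_enorm g
  have hL2 : eLpNorm g 1 (μ.restrict s) ≤ eLpNorm g 2 (μ.restrict s) * μ s ^ (1 / 2 : ℝ) := by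
    convert eLpNorm_le_eLpNorm_mul_rpow_measure_univ one_le_two hg using 2
    norm_num
  calc ‖∫ z in s, g z ∂μ‖ₑ ^ 2 ≤ (eLpNorm g 2 (μ.restrict s) * μ s ^ (1 / 2 : ℝ)) ^ 2 := by
        gcongr; exact hL1.trans hL2
    _ = μ s * ∫⁻ z in s, ‖g z‖ₑ ^ 2 ∂μ := by
        rw [mul_pow, sq_eLpNorm_two, ← ENNReal.rpow_natCast (_ ^ _), ← ENNReal.rpow_mul]
        norm_num [mul_comm]

section Steklov

variable {E F : Type*} [NormedAddCommGroup E] [NormedSpace ℝ E] [MeasurableSpace E] [BorelSpace E]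
  [NormedAddCommGroup F] [NormedSpace ℝ F]

noncomputable def steklov (μ : Measure E) (s : Set E) (ε : ℝ) (u : E → F) (x : E) : F :=
  (μ s).toReal⁻¹ • ∫ z in s, u (x - ε • z) ∂μ

theorem lintegral_mul_setLIntegral_sub_smul_of_measurable [SecondCountableTopology E]
    {μ : Measure E} [SFinite μ] [μ.IsAddLeftInvariant] {Φ Ψ : E → ℝ≥0∞} (hΦ : Measurable Φ)
    (hΨ : Measurable Ψ) {ε : ℝ} (hε : ε ≠ 0) (s : Set E) :
    ∫⁻ x, Φ (ε⁻¹ • x) * ∫⁻ z in s, Ψ (x - ε • z) ∂μ ∂μ =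
      ∫⁻ y, Ψ y * ∫⁻ z in s, Φ (ε⁻¹ • y + z) ∂μ ∂μ := by
  calc ∫⁻ x, Φ (ε⁻¹ • x) * ∫⁻ z in s, Ψ (x - ε • z) ∂μ ∂μ
      = ∫⁻ z in s, ∫⁻ x, Φ (ε⁻¹ • x) * Ψ (x - ε • z) ∂μ ∂μ := by
        rw [← lintegral_lintegral_swap (by fun_prop)]
        exact lintegral_congr fun x => (lintegral_const_mul _ (by fun_prop)).symm
    _ = ∫⁻ z in s, ∫⁻ y, Φ (ε⁻¹ • y + z) * Ψ y ∂μ ∂μ := by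
        refine lintegral_congr fun z => ?_
        rw [← lintegral_add_right_eq_self _ (ε • z)]
        simp [smul_add, smul_smul, hε]
    _ = ∫⁻ y, Ψ y * ∫⁻ z in s, Φ (ε⁻¹ • y + z) ∂μ ∂μ := by
        rw [lintegral_lintegral_swap (by fun_prop)]
        refine lintegral_congr fun y => ?_
        simp_rw [mul_comm (Φ _)]
        exact lintegral_const_mul _ (hΦ.comp (measurable_const_add _))

variable [FiniteDimensional ℝ E] {μ : Measure E} [μ.IsAddHaarMeasure] {ε : ℝ}

theorem quasiMeasurePreserving_sub_smul (hε : ε ≠ 0) (x : E) :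
    QuasiMeasurePreserving (fun z => x - ε • z) μ μ :=
  (quasiMeasurePreserving_sub_left μ x).comp (quasiMeasurePreserving_smul μ hε)

theorem lintegral_mul_setLIntegral_sub_smul {Φ Ψ : E → ℝ≥0∞} (hΦ : AEMeasurable Φ μ)
    (hΨ : AEMeasurable Ψ μ) (hε : ε ≠ 0) (s : Set E) :
    ∫⁻ x, Φ (ε⁻¹ • x) * ∫⁻ z in s, Ψ (x - ε • z) ∂μ ∂μ =
      ∫⁻ y, Ψ y * ∫⁻ z in s, Φ (ε⁻¹ • y + z) ∂μ ∂μ := by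
  have hΦ_smul := (quasiMeasurePreserving_smul μ (inv_ne_zero hε)).ae_eq_comp hΦ.ae_eq_mk
  have hΦ_add (y : E) :=
    (measurePreserving_add_left μ (ε⁻¹ • y)).quasiMeasurePreserving.ae_eq_comp hΦ.ae_eq_mk
  have hΨ_sub (x : E) := (quasiMeasurePreserving_sub_smul hε x).ae_eq_comp hΨ.ae_eq_mk
  calc ∫⁻ x, Φ (ε⁻¹ • x) * ∫⁻ z in s, Ψ (x - ε • z) ∂μ ∂μ
      = ∫⁻ x, hΦ.mk Φ (ε⁻¹ • x) * ∫⁻ z in s, hΨ.mk Ψ (x - ε • z) ∂μ ∂μ := by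
        refine lintegral_congr_ae ?_
        filter_upwards [hΦ_smul] with x hx
        exact congr_arg₂ (· * ·) hx (lintegral_congr_ae (ae_restrict_of_ae (hΨ_sub x)))
    _ = ∫⁻ y, hΨ.mk Ψ y * ∫⁻ z in s, hΦ.mk Φ (ε⁻¹ • y + z) ∂μ ∂μ :=
        lintegral_mul_setLIntegral_sub_smul_of_measurable hΦ.measurable_mk hΨ.measurable_mk hε s
    _ = ∫⁻ y, Ψ y * ∫⁻ z in s, Φ (ε⁻¹ • y + z) ∂μ ∂μ := by
        refine lintegral_congr_ae ?_
        filter_upwards [hΨ.ae_eq_mk] with y hy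
        exact congr_arg₂ (· * ·) hy.symm (lintegral_congr_ae (ae_restrict_of_ae (hΦ_add y))).symm

theorem enorm_steklov_sq_le {s : Set E} (hs0 : μ s ≠ 0) (hsfin : μ s ≠ ∞) {u : E → F}
    (hu : AEStronglyMeasurable u μ) (hε : ε ≠ 0) (x : E) :
    ‖steklov μ s ε u x‖ₑ ^ 2 ≤ (μ s)⁻¹ * ∫⁻ z in s, ‖u (x - ε • z)‖ₑ ^ 2 ∂μ := by
  have hcoef : ‖(μ s).toReal⁻¹‖ₑ = (μ s)⁻¹ := by
    rw [Real.enorm_of_nonneg (by positivity), ENNReal.ofReal_inv_of_pos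
      (ENNReal.toReal_pos hs0 hsfin), ENNReal.ofReal_toReal hsfin]
  calc ‖steklov μ s ε u x‖ₑ ^ 2 = (μ s)⁻¹ ^ 2 * ‖∫ z in s, u (x - ε • z) ∂μ‖ₑ ^ 2 := by
        rw [steklov, enorm_smul, hcoef, mul_pow]
    _ ≤ (μ s)⁻¹ ^ 2 * (μ s * ∫⁻ z in s, ‖u (x - ε • z)‖ₑ ^ 2 ∂μ) := by
        gcongr
        exact enorm_setIntegral_sq_le
          (hu.comp_quasiMeasurePreserving (quasiMeasurePreserving_sub_smul hε x)).restrict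
    _ = (μ s)⁻¹ * ∫⁻ z in s, ‖u (x - ε • z)‖ₑ ^ 2 ∂μ := by
        rw [sq, ← mul_assoc, mul_assoc _ _ (μ s), ENNReal.inv_mul_cancel hs0 hsfin, mul_one]

theorem eLpNorm_smul_steklov_le {𝕜 : Type*} [NormedField 𝕜] [NormedSpace 𝕜 F] {s : Set E}
    (hs0 : μ s ≠ 0) (hsfin : μ s ≠ ∞) {f : E → 𝕜} {u : E → F} (hf : AEStronglyMeasurable f μ)
    (hu : AEStronglyMeasurable u μ)
    (hcell : ∀ w, ∫⁻ z in s, ‖f (w + z)‖ₑ ^ 2 ∂μ = ∫⁻ z in s, ‖f z‖ₑ ^ 2 ∂μ) (hε : ε ≠ 0) :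
    eLpNorm (fun x => f (ε⁻¹ • x) • steklov μ s ε u x) 2 μ ≤
      μ s ^ (-(1 / 2 : ℝ)) * eLpNorm f 2 (μ.restrict s) * eLpNorm u 2 μ := by
  have hΦ : AEMeasurable (fun y => ‖f y‖ₑ ^ 2) μ := hf.enorm.pow_const 2
  have hΨ : AEMeasurable (fun y => ‖u y‖ₑ ^ 2) μ := hu.enorm.pow_const 2
  have hconst : (μ s ^ (-(1 / 2 : ℝ))) ^ 2 = (μ s)⁻¹ := by
    rw [← ENNReal.rpow_natCast, ← ENNReal.rpow_mul]
    norm_num [ENNReal.rpow_neg_one]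
  rw [← ENNReal.pow_le_pow_left_iff two_ne_zero, mul_pow, mul_pow, hconst, sq_eLpNorm_two,
    sq_eLpNorm_two, sq_eLpNorm_two]
  calc ∫⁻ x, ‖f (ε⁻¹ • x) • steklov μ s ε u x‖ₑ ^ 2 ∂μ
      ≤ ∫⁻ x, (μ s)⁻¹ * (‖f (ε⁻¹ • x)‖ₑ ^ 2 * ∫⁻ z in s, ‖u (x - ε • z)‖ₑ ^ 2 ∂μ) ∂μ := by
        refine lintegral_mono fun x => ?_
        rw [enorm_smul, mul_pow, mul_left_comm]
        gcongr
        exact enorm_steklov_sq_le hs0 hsfin hu hε x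
    _ = (μ s)⁻¹ * ∫⁻ y, ‖u y‖ₑ ^ 2 * ∫⁻ z in s, ‖f (ε⁻¹ • y + z)‖ₑ ^ 2 ∂μ ∂μ := by
        rw [lintegral_const_mul' _ _ (ENNReal.inv_ne_top.2 hs0),
          lintegral_mul_setLIntegral_sub_smul hΦ hΨ hε s]
    _ = (μ s)⁻¹ * (∫⁻ z in s, ‖f z‖ₑ ^ 2 ∂μ) * ∫⁻ y, ‖u y‖ₑ ^ 2 ∂μ := by
        simp_rw [hcell]
        rw [lintegral_mul_const'' _ hΨ]
        ring

end Steklov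

end MeasureTheory

/-- Zhikov–Pastukhova Lemma 1.2. Let `Γ` be a lattice in `ℝᵈ` with fundamental cell `Ω`
(of positive finite volume), and let `f` be `Γ`-periodic with `f ∈ L²(Ω)`. For `ε > 0`, the
operator `u ↦ f(x/ε)·(S_ε u)(x)`, where `(S_ε u)(x) = |Ω|⁻¹ ∫_Ω u(x - εz) dz` is the Steklov
smoothing operator, is bounded on `L²(ℝᵈ)` with norm at most `|Ω|^{-1/2}·‖f‖_{L²(Ω)}`. -/
theorem stmt7 {d : ℕ} (Γ : AddSubgroup (EuclideanSpace ℝ (Fin d)))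
    (Ω : Set (EuclideanSpace ℝ (Fin d)))
    (hΩ : IsAddFundamentalDomain Γ Ω (volume : Measure (EuclideanSpace ℝ (Fin d))))
    (hΩ0 : volume Ω ≠ 0) (hΩfin : volume Ω ≠ ⊤)
    (f : EuclideanSpace ℝ (Fin d) → ℂ)
    (hper : ∀ γ ∈ Γ, ∀ x, f (x + γ) = f x)
    (hf : MemLp f 2 (volume.restrict Ω))
    (ε : ℝ) (hε : 0 < ε) (u : EuclideanSpace ℝ (Fin d) → ℂ) (hu : MemLp u 2 volume) :
    eLpNorm
        (fun x => f (ε⁻¹ • x) * ((volume Ω).toReal⁻¹ • ∫ z in Ω, u (x - ε • z))) 2 volume ≤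
      ENNReal.ofReal ((volume Ω).toReal ^ (-(1 / 2 : ℝ)) *
          (∫ x in Ω, ‖f x‖ ^ 2) ^ (1 / 2 : ℝ)) * eLpNorm u 2 volume := by
  have : Countable Γ := hΩ.countable_of_measure_ne_zero hΩ0
  have hf_glob : AEStronglyMeasurable f volume :=
    hΩ.aestronglyMeasurable_of_restrict (fun γ x => by rw [AddSubgroup.vadd_def, vadd_eq_add,
      add_comm, hper γ γ.2]) hf.1
  have hcell := hΩ.setLIntegral_add_left_eq_self (F := fun x => ‖f x‖ₑ ^ 2)
    fun γ hγ x => by rw [hper γ hγ]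
  have hconst : ENNReal.ofReal ((volume Ω).toReal ^ (-(1 / 2 : ℝ)) *
      (∫ x in Ω, ‖f x‖ ^ 2) ^ (1 / 2 : ℝ)) =
      volume Ω ^ (-(1 / 2 : ℝ)) * eLpNorm f 2 (volume.restrict Ω) := by
    rw [ENNReal.ofReal_mul (by positivity),
      ← ENNReal.ofReal_rpow_of_pos (ENNReal.toReal_pos hΩ0 hΩfin), ENNReal.ofReal_toReal hΩfin,
      hf.eLpNorm_eq_integral_rpow_norm two_ne_zero ENNReal.ofNat_ne_top]
    simp only [ENNReal.toReal_ofNat, Real.rpow_two, one_div]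
  rw [hconst]
  exact eLpNorm_smul_steklov_le (𝕜 := ℂ) hΩ0 hΩfin hf_glob hu.1 hcell hε.ne'
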